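/- Let X be a proper metric space, A ⊆ X nonempty closed, and σ, τ ∈ D_∞(X,A). Then there exist diagrams σ', τ' ∈ D_∞(X,A) with d_∞(σ,σ') = d_∞(τ,τ') = 0 and a bijection γ : σ' → τ' (between representatives) such that d_∞(σ,τ) = sup{d(x,γ(x)) : x ∈ σ'}. -/

import Mathlib

open scoped ENNReal
open Filter Metric Set

/-- The bottleneck (pre)distance between two `ℕ`-indexed representatives of persistence
diagrams on the metric pair `(X, A)`: the infimum, over countable multisets `α`, `β` of points
of `A` adjoined to `f` and `g` respectively and over bijections between the resulting
multisets, of the supremum displacement. -/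
noncomputable def bdist {X : Type*} [MetricSpace X] (A : Set X) (f g : ℕ → X) : ℝ≥0∞ :=
  ⨅ (α : ℕ → X) (_ : ∀ n, α n ∈ A) (β : ℕ → X) (_ : ∀ n, β n ∈ A)
    (e : (ℕ ⊕ ℕ) ≃ (ℕ ⊕ ℕ)), ⨆ n : ℕ ⊕ ℕ, edist (Sum.elim f α n) (Sum.elim g β (e n))

/-- Two representatives define the same persistence diagram on `(X, A)` iff their restrictions
away from `A` agree as multisets, i.e. there is a value-preserving bijection between the index
sets of points outside `A`. -/
def DiagEquiv {X : Type*} [MetricSpace X] (A : Set X) (f g : ℕ → X) : Prop :=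
  ∃ e : {n : ℕ // f n ∉ A} ≃ {n : ℕ // g n ∉ A}, ∀ p, g (e p).1 = f p.1

/-- A representative belongs to `D_∞(X, A)` iff it is at finite bottleneck distance from the
empty diagram (represented by any multiset of points of `A`). -/
def IsDiagram {X : Type*} [MetricSpace X] (A : Set X) (f : ℕ → X) : Prop :=
  ∃ g : ℕ → X, (∀ n, g n ∈ A) ∧ bdist A f g ≠ ⊤

/-- The quotient metric of `X/A`, read on representatives in `X`:
`d_{X/A}(x,y) = min (d(x,y)) (d(x,A) + d(y,A))`. -/
noncomputable def qdist {X : Type*} [MetricSpace X] (A : Set X) (x y : X) : ℝ :=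
  min (dist x y) (Metric.infDist x A + Metric.infDist y A)

open Function Topology

/-
Let `d = d_∞(f, g) < ∞`, take matchings `e k` of cost tending to `d` and a free ultrafilter `U`
on `ℕ`. Since `X` is proper, the partner of `f i` under `e k` has a `U`-limit `z i` with
`d(f i, z i) ≤ d`, and symmetrically each `g j` gets a limit partner `w j`. If `e k` sends `i` to
the same `j` for `U`-almost all `k`, then `f i` and `g j` are paired directly. Otherwise `z i`
lies in the closure of `A` or is an accumulation point of `g`, and adding such points to a
diagram does not change its class: shift `g` along disjoint sequences converging to them
(Hilbert's hotel). So `f' = f + w` and `g' = g + z`, with the limit points of paired indices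
replaced by a point of `A`, are equivalent to `f` and `g`, and the evident bijection between them
has cost at most `d`.
-/

theorem Sum.elim_elim_sumAssoc {α β γ δ : Type*} (f : α → δ) (g : β → δ) (h : γ → δ)
    (x : (α ⊕ β) ⊕ γ) :
    Sum.elim f (Sum.elim g h) (Equiv.sumAssoc α β γ x) = Sum.elim (Sum.elim f g) h x := by
  rcases x with (_ | _) | _ <;> rfl

theorem exists_injective_forall_mem {C : ℕ → Set ℕ} (hC : ∀ i, (C i).Infinite) :
    ∃ θ : ℕ × ℕ → ℕ, Injective θ ∧ ∀ i m, θ (i, m) ∈ C i := by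
  choose next hnext hlt using fun i n => (hC i).exists_gt n
  -- enumerate `ℕ × ℕ` along `Nat.unpair`, picking strictly increasing elements
  let t : ℕ → ℕ := fun n =>
    Nat.rec (next (Nat.unpair 0).1 0) (fun n tn => next (Nat.unpair (n + 1)).1 tn) n
  have hmem : ∀ n, t n ∈ C (Nat.unpair n).1 := by rintro (_ | n) <;> exact hnext _ _
  refine ⟨t ∘ Nat.pairEquiv, (strictMono_nat_of_lt_succ fun n => hlt _ _).injective.comp
    Nat.pairEquiv.injective, fun i m => ?_⟩
  simpa using hmem (Nat.pair i m)

theorem exists_equiv_sum_of_injective {α F : Type*} {θ : F × ℕ → α} (hθ : Injective θ) :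
    ∃ s : α ≃ α ⊕ F, (∀ a ∉ range θ, s a = .inl a) ∧ (∀ i, s (θ (i, 0)) = .inr i) ∧
      ∀ i m, s (θ (i, m + 1)) = .inl (θ (i, m)) := by
  classical
  let φ := Equiv.ofInjective θ hθ
  let shift : F × ℕ → α ⊕ F := fun p => Nat.casesOn p.2 (.inr p.1) fun m => .inl (θ (p.1, m))
  let toFun : α → α ⊕ F := fun a => if ha : a ∈ range θ then shift (φ.symm ⟨a, ha⟩) else .inl a
  let invFun : α ⊕ F → α := Sum.elim
    (fun a => if ha : a ∈ range θ then θ ((φ.symm ⟨a, ha⟩).1, (φ.symm ⟨a, ha⟩).2 + 1) else a)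
    fun i => θ (i, 0)
  have hφ : ∀ p, φ.symm ⟨θ p, mem_range_self p⟩ = p := Equiv.ofInjective_symm_apply hθ
  have to_out : ∀ a ∉ range θ, toFun a = .inl a := fun a ha => dif_neg ha
  have to_θ : ∀ p, toFun (θ p) = shift p := fun p => by simp [toFun, hφ]
  have inv_out : ∀ a ∉ range θ, invFun (.inl a) = a := fun a ha => dif_neg ha
  have inv_θ : ∀ i m, invFun (.inl (θ (i, m))) = θ (i, m + 1) := fun i m => by
    simp [invFun, hφ]
  refine ⟨⟨toFun, invFun, fun a => ?_, ?_⟩, to_out, fun i => to_θ (i, 0),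
    fun i m => to_θ (i, m + 1)⟩
  · by_cases ha : a ∈ range θ
    · obtain ⟨⟨i, _ | m⟩, rfl⟩ := ha
      · simp [to_θ, shift, invFun]
      · simp [to_θ, shift, inv_θ]
    · rw [to_out a ha, inv_out a ha]
  · rintro (a | i)
    · by_cases ha : a ∈ range θ
      · obtain ⟨⟨i, m⟩, rfl⟩ := ha
        simp [inv_θ, to_θ, shift]
      · rw [inv_out a ha, to_out a ha]
    · exact to_θ (i, 0)

theorem eq_iff_eq_of_eventually_apply_eq {ι α β : Type*} {l : Filter ι} [l.NeBot]
    {e : ι → α ≃ β} {a a' : α} {b b' : β} (h : ∀ᶠ k in l, e k a = b)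
    (h' : ∀ᶠ k in l, e k a' = b') : a = a' ↔ b = b' := by
  obtain ⟨k, hk, hk'⟩ := (h.and h').exists
  rw [← hk, ← hk', (e k).injective.eq_iff]

section SwapAlong

variable {α β : Type*}

open Classical in
noncomputable def Sum.swapAlong (R : α → β → Prop) : α ⊕ β → β ⊕ α :=
  Sum.elim (fun a => if h : ∃ b, R a b then .inl h.choose else .inr a)
    fun b => if h : ∃ a, R a b then .inr h.choose else .inl b

variable {R : α → β → Prop}

theorem Sum.swapAlong_swap (x : β ⊕ α) :
    Sum.swapAlong R x.swap = (Sum.swapAlong (flip R) x).swap := by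
  rcases x with b | a
  · by_cases h : ∃ a, R a b
    · simp [swapAlong, h, flip]; rfl
    · simp [swapAlong, h, flip]
  · by_cases h : ∃ b, R a b <;> simp [swapAlong, h, flip]

theorem Sum.swapAlong_inl_of_rel (hR : ∀ a b b', R a b → R a b' → b = b') {a : α} {b : β}
    (hab : R a b) : Sum.swapAlong R (.inl a) = .inl b := by
  have h : ∃ b, R a b := ⟨b, hab⟩
  simp only [swapAlong, Sum.elim_inl, dif_pos h, hR _ _ _ h.choose_spec hab]

theorem Sum.swapAlong_inl_of_forall_not {a : α} (ha : ∀ b, ¬R a b) :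
    Sum.swapAlong R (.inl a) = .inr a := by
  simp [swapAlong, ha]

theorem Sum.swapAlong_flip_swapAlong_inl (hR₁ : ∀ a b b', R a b → R a b' → b = b')
    (hR₂ : ∀ a a' b, R a b → R a' b → a = a') (a : α) :
    Sum.swapAlong (flip R) (Sum.swapAlong R (.inl a)) = .inl a := by
  by_cases ha : ∃ b, R a b
  · obtain ⟨b, hab⟩ := ha
    rw [Sum.swapAlong_inl_of_rel hR₁ hab,
      Sum.swapAlong_inl_of_rel (R := flip R) (fun b a a' h h' => hR₂ a a' b h h') hab]
  · rw [not_exists] at ha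
    rw [Sum.swapAlong_inl_of_forall_not ha, ← Sum.swap_inl, Sum.swapAlong_swap]
    simp [Sum.swapAlong_inl_of_forall_not ha]

theorem Sum.swapAlong_flip_swapAlong (hR₁ : ∀ a b b', R a b → R a b' → b = b')
    (hR₂ : ∀ a a' b, R a b → R a' b → a = a') (x : α ⊕ β) :
    Sum.swapAlong (flip R) (Sum.swapAlong R x) = x := by
  rcases x with a | b
  · exact Sum.swapAlong_flip_swapAlong_inl hR₁ hR₂ a
  · rw [← Sum.swap_inl, Sum.swapAlong_swap, Sum.swapAlong_swap]
    exact congrArg Sum.swap <| Sum.swapAlong_flip_swapAlong_inl (R := flip R)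
      (fun b a a' h h' => hR₂ a a' b h h') (fun b b' a h h' => hR₁ a b b' h h') b

end SwapAlong

section Bottleneck

variable {X : Type*} [MetricSpace X] {A : Set X}

theorem bdist_le_of_equiv {ι κ : Type*} [Denumerable ι] [Denumerable κ] {f g : ℕ → X}
    {α : ι → X} {β : κ → X} (hα : ∀ i, α i ∈ A) (hβ : ∀ j, β j ∈ A) (e : ℕ ⊕ ι ≃ ℕ ⊕ κ)
    {c : ℝ≥0∞} (h : ∀ x, edist (Sum.elim f α x) (Sum.elim g β (e x)) ≤ c) :
    bdist A f g ≤ c := by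
  let eι := Equiv.sumCongr (Equiv.refl ℕ) (Denumerable.eqv ι)
  let eκ := Equiv.sumCongr (Equiv.refl ℕ) (Denumerable.eqv κ)
  have hf : ∀ x, Sum.elim f (α ∘ (Denumerable.eqv ι).symm) x = Sum.elim f α (eι.symm x) := by
    rintro (n | i) <;> rfl
  have hg : ∀ y, Sum.elim g (β ∘ (Denumerable.eqv κ).symm) (eκ y) = Sum.elim g β y := by
    rintro (n | j) <;> simp [eκ]
  refine iInf₂_le_of_le (α ∘ (Denumerable.eqv ι).symm) (fun _ => hα _) <|
    iInf₂_le_of_le (β ∘ (Denumerable.eqv κ).symm) (fun _ => hβ _) <|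
    iInf_le_of_le (eι.symm.trans (e.trans eκ)) <| iSup_le fun x => ?_
  simpa only [Equiv.trans_apply, hf, hg] using h (eι.symm x)

theorem bdist_le_of_countable_equiv {ι κ : Type*} [Countable ι] [Countable κ] (hA : A.Nonempty)
    {f g : ℕ → X} {α : ι → X} {β : κ → X} (hα : ∀ i, α i ∈ A) (hβ : ∀ j, β j ∈ A)
    (e : ℕ ⊕ ι ≃ ℕ ⊕ κ) {c : ℝ≥0∞}
    (h : ∀ x, edist (Sum.elim f α x) (Sum.elim g β (e x)) ≤ c) :
    bdist A f g ≤ c := by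
  obtain ⟨a, ha⟩ := hA
  have := Encodable.ofCountable ι
  have := Encodable.ofCountable κ
  have := Denumerable.ofEncodableOfInfinite (ι ⊕ ℕ)
  have := Denumerable.ofEncodableOfInfinite (κ ⊕ ℕ)
  -- pad both sides with the same infinite family of copies of `a`, matched to each other
  refine bdist_le_of_equiv (α := Sum.elim α fun _ => a) (β := Sum.elim β fun _ => a)
    (Sum.forall.2 ⟨hα, fun _ => ha⟩) (Sum.forall.2 ⟨hβ, fun _ => ha⟩)
    ((Equiv.sumAssoc ℕ ι ℕ).symm.trans <| (Equiv.sumCongr e (Equiv.refl ℕ)).trans <|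
      Equiv.sumAssoc ℕ κ ℕ) fun x => ?_
  obtain ⟨(x | m), rfl⟩ := (Equiv.sumAssoc ℕ ι ℕ).surjective x
  · simpa [Sum.elim_elim_sumAssoc] using h x
  · simp

theorem exists_equiv_edist_le_of_bdist_lt {f g : ℕ → X} {c : ℝ≥0∞} (h : bdist A f g < c) :
    ∃ (α β : ℕ → X) (e : ℕ ⊕ ℕ ≃ ℕ ⊕ ℕ), (∀ n, α n ∈ A) ∧ (∀ n, β n ∈ A) ∧
      ∀ x, edist (Sum.elim f α x) (Sum.elim g β (e x)) ≤ c := by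
  simp only [bdist, iInf_lt_iff] at h
  obtain ⟨α, hα, β, hβ, e, he⟩ := h
  exact ⟨α, β, e, hα, hβ, fun x => (le_iSup _ x).trans he.le⟩

theorem bdist_comm (f g : ℕ → X) : bdist A f g = bdist A g f := by
  suffices ∀ f g : ℕ → X, bdist A g f ≤ bdist A f g from le_antisymm (this g f) (this f g)
  intro f g
  refine le_iInf₂ fun α hα => le_iInf₂ fun β hβ => le_iInf fun e => ?_
  refine bdist_le_of_equiv hβ hα e.symm fun y => ?_
  rw [edist_comm]
  simpa using le_iSup (fun x => edist (Sum.elim f α x) (Sum.elim g β (e x))) (e.symm y)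

theorem bdist_triangle (f g h : ℕ → X) : bdist A f h ≤ bdist A f g + bdist A g h := by
  refine ENNReal.le_of_forall_pos_le_add fun ε hε hfin => ?_
  rw [ENNReal.add_lt_top] at hfin
  have hε2 : (ε / 2 : ℝ≥0∞) ≠ 0 := by simpa using hε.ne'
  obtain ⟨α₁, β₁, e₁, hα₁, hβ₁, he₁⟩ :=
    exists_equiv_edist_le_of_bdist_lt (ENNReal.lt_add_right hfin.1.ne hε2)
  obtain ⟨α₂, β₂, e₂, hα₂, hβ₂, he₂⟩ :=
    exists_equiv_edist_le_of_bdist_lt (ENNReal.lt_add_right hfin.2.ne hε2)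
  -- pad `f` with `α₁, α₂` and `h` with `β₂, β₁`; route `f → g → h` through `e₁` then `e₂`
  let E : ℕ ⊕ (ℕ ⊕ ℕ) ≃ ℕ ⊕ (ℕ ⊕ ℕ) :=
    (Equiv.sumAssoc ℕ ℕ ℕ).symm.trans <| (Equiv.sumCongr e₁ (Equiv.refl ℕ)).trans <|
      (Equiv.sumAssoc ℕ ℕ ℕ).trans <| (Equiv.sumCongr (Equiv.refl ℕ) (Equiv.sumComm ℕ ℕ)).trans <|
      (Equiv.sumAssoc ℕ ℕ ℕ).symm.trans <| (Equiv.sumCongr e₂ (Equiv.refl ℕ)).trans <|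
      Equiv.sumAssoc ℕ ℕ ℕ
  refine bdist_le_of_equiv (α := Sum.elim α₁ α₂) (β := Sum.elim β₂ β₁)
    (Sum.forall.2 ⟨hα₁, hα₂⟩) (Sum.forall.2 ⟨hβ₂, hβ₁⟩) E fun x => ?_
  have hsum : bdist A f g + bdist A g h + ε = (bdist A f g + ε / 2) + (bdist A g h + ε / 2) := by
    rw [add_add_add_comm, ENNReal.add_halves]
  rw [hsum]
  obtain ⟨(p | m), rfl⟩ := (Equiv.sumAssoc ℕ ℕ ℕ).surjective x
  · have h₁ := he₁ p
    rcases hy : e₁ p with q | m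
    · have h₂ := he₂ (.inl q)
      simp only [hy, Sum.elim_inl] at h₁ h₂
      simpa [E, hy, Sum.elim_elim_sumAssoc] using (edist_triangle _ _ _).trans (add_le_add h₁ h₂)
    · simp only [hy, Sum.elim_inr] at h₁
      simpa [E, hy, Sum.elim_elim_sumAssoc] using le_add_right h₁
  · simpa [E, Sum.elim_elim_sumAssoc] using le_add_left (he₂ (.inr m))

theorem bdist_le_iSup_edist (hA : A.Nonempty) (f g : ℕ → X) (e : ℕ ≃ ℕ) :
    bdist A f g ≤ ⨆ n, edist (f n) (g (e n)) :=
  bdist_le_of_countable_equiv hA (α := Empty.elim) (β := Empty.elim) Empty.rec Empty.rec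
    (Equiv.sumCongr e (Equiv.refl Empty)) <| by
      rintro (n | x)
      exacts [le_iSup (fun n => edist (f n) (g (e n))) n, x.elim]

theorem bdist_self (hA : A.Nonempty) (f : ℕ → X) : bdist A f f = 0 :=
  nonpos_iff_eq_zero.1 <| by simpa using bdist_le_iSup_edist hA f f (Equiv.refl ℕ)

theorem bdist_le_of_bdist_eq_zero {f f' g g' : ℕ → X} (hf : bdist A f f' = 0)
    (hg : bdist A g g' = 0) : bdist A f g ≤ bdist A f' g' :=
  calc bdist A f g ≤ bdist A f f' + (bdist A f' g' + bdist A g' g) :=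
        (bdist_triangle f f' g).trans (by gcongr; exact bdist_triangle f' g' g)
    _ = bdist A f' g' := by rw [hf, bdist_comm g', hg, zero_add, add_zero]

theorem IsDiagram.of_bdist_eq_zero {f f' : ℕ → X} (hf : IsDiagram A f) (hff' : bdist A f f' = 0) :
    IsDiagram A f' := by
  obtain ⟨g, hgA, hfg⟩ := hf
  refine ⟨g, hgA, ne_top_of_le_ne_top hfg ?_⟩
  calc bdist A f' g ≤ bdist A f' f + bdist A f g := bdist_triangle f' f g
    _ = bdist A f g := by rw [bdist_comm, hff', zero_add]

theorem bdist_append_le (hA : A.Nonempty) (g u : ℕ → X) (ν : ℕ ≃ ℕ ⊕ ℕ) {ε : ℝ≥0∞}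
    (h : ∀ i, (∃ a ∈ A, edist (u i) a ≤ ε) ∨ {j | edist (g j) (u i) ≤ ε}.Infinite) :
    bdist A g (Sum.elim g u ∘ ν) ≤ ε + ε := by
  classical
  let near : ℕ → Prop := fun i => ∃ a ∈ A, edist (u i) a ≤ ε
  have : Nonempty X := hA.to_subtype.map Subtype.val
  choose! b hbA hb using fun i (hi : near i) => hi
  obtain ⟨θ, hθ, hθC⟩ := exists_injective_forall_mem
    (C := fun i => {j | near i ∨ edist (g j) (u i) ≤ ε})
    fun i => (h i).elim (fun hi => infinite_univ.mono fun _ _ => Or.inl hi)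
      fun hi => hi.mono fun _ => Or.inr
  have hθu : ∀ (i : {i // ¬near i}) m, edist (g (θ (i, m))) (u i) ≤ ε :=
    fun i m => (hθC i m).resolve_left i.2
  -- each far point `u i` is absorbed by shifting `g` along its chain `θ (i, ·)`
  obtain ⟨s, hs_out, hs_zero, hs_succ⟩ := exists_equiv_sum_of_injective
    (θ := fun p : {i // ¬near i} × ℕ => θ (p.1, p.2)) (hθ.comp fun p q hpq => by
      simpa [Prod.ext_iff, Subtype.ext_iff] using hpq)
  let E : ℕ ⊕ {i // near i} ≃ ℕ ⊕ ℕ := (Equiv.sumCongr s (Equiv.refl _)).trans <|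
    (Equiv.sumAssoc _ _ _).trans <|
    Equiv.sumCongr (Equiv.refl ℕ) ((Equiv.sumComm _ _).trans (Equiv.sumCompl near))
  have hE : ∀ x, Sum.elim (Sum.elim g u ∘ ν) Empty.elim
      ((E.trans (ν.symm.trans (Equiv.sumEmpty ℕ Empty).symm)) x) = Sum.elim g u (E x) := by
    intro x; simp
  refine bdist_le_of_countable_equiv hA (α := fun i : {i // near i} => b i) (β := Empty.elim)
    (fun i => hbA i i.2) Empty.rec (E.trans (ν.symm.trans (Equiv.sumEmpty ℕ Empty).symm))
    fun x => ?_
  rw [hE]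
  rcases x with j | ⟨i, hi⟩
  · by_cases hj : j ∈ range fun p : {i // ¬near i} × ℕ => θ (p.1, p.2)
    · obtain ⟨⟨i, _ | m⟩, rfl⟩ := hj
      · simpa [E, hs_zero] using le_add_right (hθu i 0)
      · simpa [E, hs_succ] using (edist_triangle_right _ _ (u i)).trans
          (add_le_add (hθu i (m + 1)) (hθu i m))
    · simp [E, hs_out j hj]
  · simpa [E, edist_comm] using le_add_right (hb i hi)

theorem bdist_append_eq_zero (hA : A.Nonempty) (g u : ℕ → X) (ν : ℕ ≃ ℕ ⊕ ℕ)
    (h : ∀ i, u i ∈ closure A ∨ MapClusterPt (u i) cofinite g) :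
    bdist A g (Sum.elim g u ∘ ν) = 0 := by
  refine nonpos_iff_eq_zero.1 (ENNReal.le_of_forall_pos_le_add fun ε hε _ => ?_)
  have hε2 : 0 < (ε / 2 : ℝ≥0∞) := ENNReal.half_pos (by simpa using hε.ne')
  rw [zero_add, ← ENNReal.add_halves (ε : ℝ≥0∞)]
  refine bdist_append_le hA g u ν fun i => (h i).imp (fun hi => ?_) fun hi => ?_
  · obtain ⟨a, ha, hlt⟩ := EMetric.mem_closure_iff.1 hi _ hε2
    exact ⟨a, ha, hlt.le⟩
  · exact frequently_cofinite_iff_infinite.1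
      (mapClusterPt_iff_frequently.1 hi _ (Metric.closedEBall_mem_nhds _ hε2))

theorem exists_tendsto_edist_le [ProperSpace X] {ι : Type*} (U : Ultrafilter ι) (x : X)
    {y : ι → X} {c : ι → ℝ≥0∞} {d : ℝ≥0∞} (hd : d ≠ ⊤) (hc : Tendsto c U (𝓝 d))
    (h : ∀ k, edist x (y k) ≤ c k) : ∃ z, Tendsto y U (𝓝 z) ∧ edist x z ≤ d := by
  have hy : ∀ᶠ k in U, y k ∈ closedBall x (d + 1).toReal := by
    filter_upwards [hc.eventually (gt_mem_nhds (ENNReal.lt_add_right hd one_ne_zero))]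
      with k hk
    rw [mem_closedBall, dist_comm, dist_edist]
    exact ENNReal.toReal_mono (ENNReal.add_ne_top.2 ⟨hd, ENNReal.one_ne_top⟩) ((h k).trans hk.le)
  obtain ⟨z, -, hz⟩ := (isCompact_closedBall x _).ultrafilter_le_nhds (U.map y)
    (le_principal_iff.2 hy)
  exact ⟨z, hz, le_of_tendsto_of_tendsto' (tendsto_const_nhds.edist hz) hc h⟩

theorem mem_closure_or_mapClusterPt_of_tendsto {ι : Type*} (U : Ultrafilter ι) {g : ℕ → X}
    {β : ι → ℕ → X} (hβ : ∀ k n, β k n ∈ A) {v : ι → ℕ ⊕ ℕ} {z : X}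
    (hz : Tendsto (fun k => Sum.elim g (β k) (v k)) U (𝓝 z))
    (hv : ∀ j, ¬∀ᶠ k in U, v k = .inl j) : z ∈ closure A ∨ MapClusterPt z cofinite g := by
  refine or_iff_not_imp_left.2 fun hzA => mapClusterPt_iff_frequently.2 fun s hs => ?_
  obtain ⟨t, hts, ht, hzt⟩ :=
    _root_.mem_nhds_iff.1 (inter_mem hs (isClosed_closure.compl_mem_nhds hzA))
  refine frequently_cofinite_iff_infinite.2 <|
    Infinite.mono (fun j (hj : g j ∈ t) => (hts hj).1) fun hfin => ?_
  -- eventually `v k` points at one of the finitely many `j` with `g j ∈ t`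
  have hev : ∀ᶠ k in U, ∃ j ∈ {j | g j ∈ t}, v k = .inl j := by
    filter_upwards [hz (ht.mem_nhds hzt)] with k hk
    rcases hvk : v k with j | n
    · exact ⟨j, by simpa [hvk] using hk, rfl⟩
    · simp only [hvk, Sum.elim_inr, mem_preimage] at hk
      exact ((hts hk).2 (subset_closure (hβ k n))).elim
  obtain ⟨j, -, hj⟩ := (Ultrafilter.eventually_exists_mem_iff hfin).1 hev
  exact hv j hj

theorem exists_limit_point [ProperSpace X] {ι : Type*} (U : Ultrafilter ι) (x : X) {g : ℕ → X}
    {β : ι → ℕ → X} (hβ : ∀ k n, β k n ∈ A) {v : ι → ℕ ⊕ ℕ} {c : ι → ℝ≥0∞} {d : ℝ≥0∞}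
    (hd : d ≠ ⊤) (hc : Tendsto c U (𝓝 d)) (h : ∀ k, edist x (Sum.elim g (β k) (v k)) ≤ c k) :
    ∃ z, edist x z ≤ d ∧ (∀ j, (∀ᶠ k in U, v k = .inl j) → z = g j) ∧
      ((∀ j, ¬∀ᶠ k in U, v k = .inl j) → z ∈ closure A ∨ MapClusterPt z cofinite g) := by
  obtain ⟨z, hz, hxz⟩ := exists_tendsto_edist_le U x hd hc h
  refine ⟨z, hxz, fun j hj => tendsto_nhds_unique hz (tendsto_const_nhds.congr' ?_),
    mem_closure_or_mapClusterPt_of_tendsto U hβ hz⟩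
  filter_upwards [hj] with k hk
  simp [hk]

theorem exists_seq_equiv_edist_le_tendsto {f g : ℕ → X} (h : bdist A f g ≠ ⊤) :
    ∃ (α β : ℕ → ℕ → X) (e : ℕ → ℕ ⊕ ℕ ≃ ℕ ⊕ ℕ) (c : ℕ → ℝ≥0∞), (∀ k n, α k n ∈ A) ∧
      (∀ k n, β k n ∈ A) ∧ Tendsto c atTop (𝓝 (bdist A f g)) ∧
      ∀ k x, edist (Sum.elim f (α k) x) (Sum.elim g (β k) (e k x)) ≤ c k := by
  obtain ⟨c, -, hc_mem, hc⟩ := exists_seq_strictAnti_tendsto' h.lt_top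
  choose α β e hα hβ he using fun k => exists_equiv_edist_le_of_bdist_lt (hc_mem k).1
  exact ⟨α, β, e, c, hα, hβ, hc, he⟩

theorem exists_equiv_edist_le_of_rel {R : ℕ → ℕ → Prop} (hR₁ : ∀ i j j', R i j → R i j' → j = j')
    (hR₂ : ∀ i i' j, R i j → R i' j → i = i') {f g z w : ℕ → X} {d : ℝ≥0∞}
    (hR : ∀ i j, R i j → edist (f i) (g j) ≤ d ∧ edist (w j) (z i) ≤ d)
    (hfz : ∀ i, (∀ j, ¬R i j) → edist (f i) (z i) ≤ d)
    (hwg : ∀ j, (∀ i, ¬R i j) → edist (w j) (g j) ≤ d) :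
    ∃ E : ℕ ⊕ ℕ ≃ ℕ ⊕ ℕ, ∀ x, edist (Sum.elim f w x) (Sum.elim g z (E x)) ≤ d := by
  have hR₁' : ∀ j i i', flip R j i → flip R j i' → i = i' := fun j i i' h h' => hR₂ i i' j h h'
  refine ⟨⟨Sum.swapAlong R, Sum.swapAlong (flip R), Sum.swapAlong_flip_swapAlong hR₁ hR₂,
    Sum.swapAlong_flip_swapAlong hR₁' fun j j' i h h' => hR₁ i j j' h h'⟩, fun x => ?_⟩
  change edist _ (Sum.elim g z (Sum.swapAlong R x)) ≤ d
  rcases x with i | j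
  · by_cases hi : ∃ j, R i j
    · obtain ⟨j, hij⟩ := hi
      simpa [Sum.swapAlong_inl_of_rel hR₁ hij] using (hR i j hij).1
    · rw [not_exists] at hi
      simpa [Sum.swapAlong_inl_of_forall_not hi] using hfz i hi
  · rw [← Sum.swap_inl, Sum.swapAlong_swap]
    by_cases hj : ∃ i, R i j
    · obtain ⟨i, hij⟩ := hj
      simpa [Sum.swapAlong_inl_of_rel (R := flip R) hR₁' hij] using (hR i j hij).2
    · rw [not_exists] at hj
      simpa [Sum.swapAlong_inl_of_forall_not (R := flip R) hj] using hwg j hj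

theorem exists_limit_matching [ProperSpace X] {f g : ℕ → X} (hfg : bdist A f g ≠ ⊤) :
    ∃ (R : ℕ → ℕ → Prop) (z w : ℕ → X), (∀ i j j', R i j → R i j' → j = j') ∧
      (∀ i i' j, R i j → R i' j → i = i') ∧ (∀ i j, R i j → edist (f i) (g j) ≤ bdist A f g) ∧
      (∀ i, edist (f i) (z i) ≤ bdist A f g) ∧ (∀ j, edist (w j) (g j) ≤ bdist A f g) ∧
      (∀ i, (∀ j, ¬R i j) → z i ∈ closure A ∨ MapClusterPt (z i) cofinite g) ∧
      (∀ j, (∀ i, ¬R i j) → w j ∈ closure A ∨ MapClusterPt (w j) cofinite f) := by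
  obtain ⟨α, β, e, c, hα, hβ, hc, he⟩ := exists_seq_equiv_edist_le_tendsto hfg
  let U := hyperfilter ℕ
  have hcU : Tendsto c U (𝓝 (bdist A f g)) :=
    hc.mono_left (hyperfilter_le_cofinite.trans_eq Nat.cofinite_eq_atTop)
  have he' : ∀ k j, edist (g j) (Sum.elim f (α k) ((e k).symm (.inl j))) ≤ c k := fun k j => by
    simpa [edist_comm] using he k ((e k).symm (.inl j))
  choose z hfz hzR hzA using fun i => exists_limit_point U (f i) hβ hfg hcU (he · (.inl i))
  choose w hgw _ hwA using fun j => exists_limit_point U (g j) hα hfg hcU (he' · j)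
  let R : ℕ → ℕ → Prop := fun i j => ∀ᶠ k in U, e k (.inl i) = .inl j
  have hR : ∀ i j, R i j ↔ ∀ᶠ k in U, (e k).symm (.inl j) = .inl i := fun i j =>
    eventually_congr (.of_forall fun k => by rw [Equiv.symm_apply_eq, eq_comm])
  refine ⟨R, z, w,
    fun i j j' h h' => Sum.inl_injective ((eq_iff_eq_of_eventually_apply_eq h h').1 rfl),
    fun i i' j h h' => Sum.inl_injective ((eq_iff_eq_of_eventually_apply_eq h h').2 rfl),
    fun i j hij => hzR i j hij ▸ hfz i, hfz, fun j => edist_comm (g j) (w j) ▸ hgw j,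
    hzA, fun j hj => hwA j fun i => by simpa [hR] using hj i⟩

theorem exists_equiv_iSup_edist_le_bdist [ProperSpace X] (hA : A.Nonempty) {f g : ℕ → X}
    (hfg : bdist A f g ≠ ⊤) : ∃ f' g' : ℕ → X, bdist A f f' = 0 ∧ bdist A g g' = 0 ∧
      ∃ e : ℕ ≃ ℕ, ⨆ n, edist (f' n) (g' (e n)) ≤ bdist A f g := by
  classical
  obtain ⟨a, ha⟩ := hA
  obtain ⟨R, z, w, hR₁, hR₂, hR, hfz, hwg, hzA, hwA⟩ := exists_limit_matching hfg
  -- matched pairs are paired directly, so their limit points are replaced by copies of `a`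
  let z' : ℕ → X := fun i => if ∃ j, R i j then a else z i
  let w' : ℕ → X := fun j => if ∃ i, R i j then a else w j
  obtain ⟨E, hE⟩ := exists_equiv_edist_le_of_rel hR₁ hR₂ (f := f) (g := g) (z := z') (w := w')
    (d := bdist A f g) (fun i j hij => ⟨hR i j hij, by
      simp [z', w', show ∃ i', R i' j from ⟨i, hij⟩, show ∃ j', R i j' from ⟨j, hij⟩]⟩)
    (fun i hi => by simpa [z', hi] using hfz i) (fun j hj => by simpa [w', hj] using hwg j)
  let ν := (Denumerable.eqv (ℕ ⊕ ℕ)).symm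
  refine ⟨Sum.elim f w' ∘ ν, Sum.elim g z' ∘ ν, bdist_append_eq_zero ⟨a, ha⟩ f w' ν fun j => ?_,
    bdist_append_eq_zero ⟨a, ha⟩ g z' ν fun i => ?_, ν.trans (E.trans ν.symm),
    iSup_le fun n => by simpa using hE (ν n)⟩
  · by_cases hj : ∃ i, R i j
    · simpa [w', hj] using Or.inl (subset_closure ha)
    · simpa [w', hj] using hwA j (not_exists.1 hj)
  · by_cases hi : ∃ j, R i j
    · simpa [z', hi] using Or.inl (subset_closure ha)
    · simpa [z', hi] using hzA i (not_exists.1 hi)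

end Bottleneck

theorem stmt_13_general {X : Type*} [MetricSpace X] [ProperSpace X] (A : Set X)
    (hA : A.Nonempty)
    (f g : ℕ → X) (hf : IsDiagram A f) (hg : IsDiagram A g) :
    ∃ f' g' : ℕ → X, IsDiagram A f' ∧ IsDiagram A g' ∧
      bdist A f f' = 0 ∧ bdist A g g' = 0 ∧
      ∃ e : ℕ ≃ ℕ, bdist A f g = ⨆ n, edist (f' n) (g' (e n)) := by
  by_cases hfg : bdist A f g = ⊤
  · refine ⟨f, g, hf, hg, bdist_self hA f, bdist_self hA g, Equiv.refl ℕ, ?_⟩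
    exact hfg.trans (top_unique (hfg ▸ bdist_le_iSup_edist hA f g (Equiv.refl ℕ))).symm
  obtain ⟨f', g', hff', hgg', e, he⟩ := exists_equiv_iSup_edist_le_bdist hA hfg
  refine ⟨f', g', hf.of_bdist_eq_zero hff', hg.of_bdist_eq_zero hgg', hff', hgg', e,
    le_antisymm ?_ he⟩
  exact (bdist_le_of_bdist_eq_zero hff' hgg').trans (bdist_le_iSup_edist hA f' g' e)

/-- If `X` is proper, then for any diagrams `σ, τ ∈ D_∞(X, A)` there are diagrams
`σ', τ'` at bottleneck distance `0` from `σ, τ` respectively and a bijection between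
(representatives of) `σ'` and `τ'` realizing the bottleneck distance `d_∞(σ, τ)`. -/
theorem stmt_13 {X : Type*} [MetricSpace X] [ProperSpace X] (A : Set X)
    (hA : A.Nonempty) (hAcl : IsClosed A)
    (f g : ℕ → X) (hf : IsDiagram A f) (hg : IsDiagram A g) :
    ∃ f' g' : ℕ → X, IsDiagram A f' ∧ IsDiagram A g' ∧
      bdist A f f' = 0 ∧ bdist A g g' = 0 ∧
      ∃ e : ℕ ≃ ℕ, bdist A f g = ⨆ n, edist (f' n) (g' (e n)) :=
  stmt_13_general A hA f g hf hg
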